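/- arXiv:1212.6909 — 3 statements merged into one kernel-verified Lean document; each statement's English description precedes it below -/
import Mathlib

section
/- Let G₁, G₂ be graphs, eᵢ = xᵢyᵢ an edge of Gᵢ, and let G₁≡₂G₂ denote the 2-join: delete e₁ and e₂ and add the edges x₁x₂ and y₁y₂. Then for each i ∈ {1,2} there is a cycle-continuous mapping from Gᵢ to G₁≡₂G₂, given by the identity on E(Gᵢ)∖{eᵢ} and sending eᵢ to the new edge x₁x₂. -/
/-- A finite multigraph: a vertex type, an edge type, and two (arbitrarily ordered)
endpoints for each edge.  Loops (`fst e = snd e`) and parallel edges are allowed. -/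
structure Multigraph where
  V : Type
  E : Type
  fst : E → V
  snd : E → V
  [fintypeV : Fintype V]
  [fintypeE : Fintype E]
  [decEqV : DecidableEq V]
  [decEqE : DecidableEq E]

attribute [instance] Multigraph.fintypeV Multigraph.fintypeE Multigraph.decEqV Multigraph.decEqE

namespace Multigraph

/-- The number of times edge `e` is incident with vertex `v` (a loop counts twice). -/
def inc (G : Multigraph) (v : G.V) (e : G.E) : ℕ :=
  (if G.fst e = v then 1 else 0) + (if G.snd e = v then 1 else 0)

/-- A set of edges is a *cycle* if every vertex is incident with an even number of
its edges (loops counted twice). -/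
def IsCycle (G : Multigraph) (C : Finset G.E) : Prop :=
  ∀ v : G.V, Even (∑ e ∈ C, G.inc v e)

/-- The preimage of a finite set of edges under a mapping. -/
def preim {α β : Type} [Fintype α] [DecidableEq β] (f : α → β) (C : Finset β) : Finset α :=
  Finset.univ.filter (fun e => f e ∈ C)

/-- A mapping `f : E(G) → E(H)` is *cycle-continuous* if the preimage of every
cycle of `H` is a cycle of `G`. -/
def CycleContinuous (G H : Multigraph) (f : G.E → H.E) : Prop :=
  ∀ C : Finset H.E, H.IsCycle C → G.IsCycle (preim f C)

/-- The cut `δ(U)`: edges with exactly one endpoint in `U`. -/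
def cutOf (G : Multigraph) (U : Finset G.V) : Finset G.E :=
  Finset.univ.filter (fun e => Xor (G.fst e ∈ U) (G.snd e ∈ U))

/-- A set of edges is a *cut* if it equals `δ(U)` for some vertex set `U`. -/
def IsCut (G : Multigraph) (C : Finset G.E) : Prop :=
  ∃ U : Finset G.V, C = G.cutOf U

/-- The set of edges incident with a vertex `v`. -/
def incidentEdges (G : Multigraph) (v : G.V) : Finset G.E :=
  Finset.univ.filter (fun e => G.fst e = v ∨ G.snd e = v)

/-- The degree of a vertex (loops counted twice). -/
def degree (G : Multigraph) (v : G.V) : ℕ := ∑ e : G.E, G.inc v e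

def Cubic (G : Multigraph) : Prop := ∀ v : G.V, G.degree v = 3

/-- A graph is bridgeless if no cut consists of exactly one edge. -/
def Bridgeless (G : Multigraph) : Prop := ∀ C : Finset G.E, G.IsCut C → C.card ≠ 1

/-- A graph is connected if it has a vertex and every nontrivial vertex set
has a nonempty cut. -/
def Connected (G : Multigraph) : Prop :=
  Nonempty G.V ∧ ∀ U : Finset G.V, U ≠ ∅ → U ≠ Finset.univ → G.cutOf U ≠ ∅

/-- `K₂³`: the graph with two vertices joined by three parallel edges. -/
def K23 : Multigraph where
  V := Bool
  E := Fin 3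
  fst := fun _ => false
  snd := fun _ => true

/-- A snark: a connected cubic bridgeless graph with no cycle-continuous mapping to `K₂³`. -/
def IsSnark (G : Multigraph) : Prop :=
  G.Cubic ∧ G.Connected ∧ G.Bridgeless ∧ ¬ ∃ f : G.E → K23.E, CycleContinuous G K23 f

/-- A proper 3-edge-coloring: distinct edges sharing a vertex get distinct colors. -/
def Proper3EdgeColorable (G : Multigraph) : Prop :=
  ∃ c : G.E → Fin 3, ∀ e e' : G.E, e ≠ e' →
    (∃ v : G.V, 0 < G.inc v e ∧ 0 < G.inc v e') → c e ≠ c e'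

/-- An isomorphism of multigraphs: bijections on vertices and edges preserving
incidence (the two endpoints of an edge may be matched in either order). -/
structure Iso (G H : Multigraph) where
  φ : G.V ≃ H.V
  ε : G.E ≃ H.E
  ends : ∀ e : G.E,
    (φ (G.fst e) = H.fst (ε e) ∧ φ (G.snd e) = H.snd (ε e)) ∨
    (φ (G.fst e) = H.snd (ε e) ∧ φ (G.snd e) = H.fst (ε e))

/-- Edge-transitivity: any edge can be carried to any other by an automorphism. -/
def EdgeTransitive (K : Multigraph) : Prop :=
  ∀ e₁ e₂ : K.E, ∃ σ : Iso K K, σ.ε e₁ = e₂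

/-- Adjacency of vertices. -/
def Adj (G : Multigraph) (u v : G.V) : Prop :=
  ∃ e : G.E, (G.fst e = u ∧ G.snd e = v) ∨ (G.fst e = v ∧ G.snd e = u)

/-- Deleting an edge. -/
def deleteEdge (G : Multigraph) (e : G.E) : Multigraph where
  V := G.V
  E := {e' : G.E // e' ≠ e}
  fst := fun e' => G.fst e'.1
  snd := fun e' => G.snd e'.1

/-- Contracting an edge `e`: its two endpoints are identified (the endpoint `snd e`
is merged into `fst e`), the loop arising from `e` is deleted, all other edges kept. -/
def contract (G : Multigraph) (e : G.E) : Multigraph where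
  V := G.V
  E := {e' : G.E // e' ≠ e}
  fst := fun e' => if G.fst e'.1 = G.snd e then G.fst e else G.fst e'.1
  snd := fun e' => if G.snd e'.1 = G.snd e then G.fst e else G.snd e'.1

/-- The 2-join of `G₁` and `G₂` along edges `e₁`, `e₂`: delete `e₁` and `e₂` and
add two new edges `x₁x₂` (coded `Sum.inr false`) and `y₁y₂` (coded `Sum.inr true`),
where `xᵢ = fst eᵢ` and `yᵢ = snd eᵢ`. -/
def twoJoin (G₁ G₂ : Multigraph) (e₁ : G₁.E) (e₂ : G₂.E) : Multigraph where
  V := G₁.V ⊕ G₂.V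
  E := ({a : G₁.E // a ≠ e₁} ⊕ {b : G₂.E // b ≠ e₂}) ⊕ Bool
  fst := fun e => match e with
    | .inl (.inl a) => .inl (G₁.fst a.1)
    | .inl (.inr b) => .inr (G₂.fst b.1)
    | .inr false => .inl (G₁.fst e₁)
    | .inr true => .inl (G₁.snd e₁)
  snd := fun e => match e with
    | .inl (.inl a) => .inl (G₁.snd a.1)
    | .inl (.inr b) => .inr (G₂.snd b.1)
    | .inr false => .inr (G₂.fst e₂)
    | .inr true => .inr (G₂.snd e₂)

/-- The natural mapping `E(G₁) → E(G₁ ≡₂ G₂)`: identity on `E(G₁) \ {e₁}`,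
and `e₁` goes to the new edge `x₁x₂`. -/
def twoJoinMapL (G₁ G₂ : Multigraph) (e₁ : G₁.E) (e₂ : G₂.E) :
    G₁.E → (twoJoin G₁ G₂ e₁ e₂).E :=
  fun a => if h : a = e₁ then .inr false else .inl (.inl ⟨a, h⟩)

/-- The natural mapping `E(G₂) → E(G₁ ≡₂ G₂)`: identity on `E(G₂) \ {e₂}`,
and `e₂` goes to the new edge `x₁x₂`. -/
def twoJoinMapR (G₁ G₂ : Multigraph) (e₁ : G₁.E) (e₂ : G₂.E) :
    G₂.E → (twoJoin G₁ G₂ e₁ e₂).E :=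
  fun b => if h : b = e₂ then .inr false else .inl (.inr ⟨b, h⟩)

lemma ne_of_inc_eq_zero (G : Multigraph) {u : G.V} {e : G.E} (h : G.inc u e = 0) :
    G.fst e ≠ u ∧ G.snd e ≠ u := by
  unfold inc at h
  constructor <;> intro he <;> simp [he] at h

/-- The endpoint of `e` other than `u`. -/
def otherEnd (G : Multigraph) (u : G.V) (e : G.E) : G.V :=
  if G.fst e = u then G.snd e else G.fst e

lemma otherEnd_ne (G : Multigraph) {u : G.V} {e : G.E} (h : G.inc u e = 1) :
    G.otherEnd u e ≠ u := by
  unfold inc at h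
  unfold otherEnd
  split_ifs with hf
  · intro hs; rw [hf, hs] at h; simp at h
  · exact hf

/-- The 3-join of `G₁` and `G₂`: the degree-3 vertices `u₁`, `u₂` are deleted
(`aᵢ j`, `j = 0,1,2`, are the three edges at `uᵢ`, none of them a loop, and all other
edges avoid `uᵢ`), and three new matching edges (coded `Sum.inr j`) are added, the
`j`-th joining the other endpoint of `a₁ j` to the other endpoint of `a₂ j`. -/
def threeJoin (G₁ G₂ : Multigraph) (u₁ : G₁.V) (u₂ : G₂.V)
    (a₁ : Fin 3 → G₁.E) (a₂ : Fin 3 → G₂.E)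
    (h₁ : ∀ j, G₁.inc u₁ (a₁ j) = 1) (h₂ : ∀ j, G₂.inc u₂ (a₂ j) = 1)
    (hz₁ : ∀ e, (∀ j, e ≠ a₁ j) → G₁.inc u₁ e = 0)
    (hz₂ : ∀ e, (∀ j, e ≠ a₂ j) → G₂.inc u₂ e = 0) : Multigraph where
  V := {v : G₁.V // v ≠ u₁} ⊕ {v : G₂.V // v ≠ u₂}
  E := ({e : G₁.E // ∀ j, e ≠ a₁ j} ⊕ {e : G₂.E // ∀ j, e ≠ a₂ j}) ⊕ Fin 3
  fst := fun e => match e with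
    | .inl (.inl a) => .inl ⟨G₁.fst a.1, (ne_of_inc_eq_zero G₁ (hz₁ a.1 a.2)).1⟩
    | .inl (.inr b) => .inr ⟨G₂.fst b.1, (ne_of_inc_eq_zero G₂ (hz₂ b.1 b.2)).1⟩
    | .inr j => .inl ⟨G₁.otherEnd u₁ (a₁ j), otherEnd_ne G₁ (h₁ j)⟩
  snd := fun e => match e with
    | .inl (.inl a) => .inl ⟨G₁.snd a.1, (ne_of_inc_eq_zero G₁ (hz₁ a.1 a.2)).2⟩
    | .inl (.inr b) => .inr ⟨G₂.snd b.1, (ne_of_inc_eq_zero G₂ (hz₂ b.1 b.2)).2⟩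
    | .inr j => .inr ⟨G₂.otherEnd u₂ (a₂ j), otherEnd_ne G₂ (h₂ j)⟩

/-- The natural mapping `E(G₁) → E(G₁ ≡ G₂)`: identity on edges not incident with
`u₁`, and the edge `a₁ j` at `u₁` goes to the `j`-th added matching edge. -/
noncomputable def threeJoinMapL (G₁ G₂ : Multigraph) (u₁ : G₁.V) (u₂ : G₂.V)
    (a₁ : Fin 3 → G₁.E) (a₂ : Fin 3 → G₂.E)
    (h₁ : ∀ j, G₁.inc u₁ (a₁ j) = 1) (h₂ : ∀ j, G₂.inc u₂ (a₂ j) = 1)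
    (hz₁ : ∀ e, (∀ j, e ≠ a₁ j) → G₁.inc u₁ e = 0)
    (hz₂ : ∀ e, (∀ j, e ≠ a₂ j) → G₂.inc u₂ e = 0) :
    G₁.E → (threeJoin G₁ G₂ u₁ u₂ a₁ a₂ h₁ h₂ hz₁ hz₂).E :=
  fun e => if h : ∀ j, e ≠ a₁ j then .inl (.inl ⟨e, h⟩)
    else .inr (Classical.choose (by push_neg at h; exact h))

/-- The natural mapping `E(G₂) → E(G₁ ≡ G₂)`. -/
noncomputable def threeJoinMapR (G₁ G₂ : Multigraph) (u₁ : G₁.V) (u₂ : G₂.V)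
    (a₁ : Fin 3 → G₁.E) (a₂ : Fin 3 → G₂.E)
    (h₁ : ∀ j, G₁.inc u₁ (a₁ j) = 1) (h₂ : ∀ j, G₂.inc u₂ (a₂ j) = 1)
    (hz₁ : ∀ e, (∀ j, e ≠ a₁ j) → G₁.inc u₁ e = 0)
    (hz₂ : ∀ e, (∀ j, e ≠ a₂ j) → G₂.inc u₂ e = 0) :
    G₂.E → (threeJoin G₁ G₂ u₁ u₂ a₁ a₂ h₁ h₂ hz₁ hz₂).E :=
  fun e => if h : ∀ j, e ≠ a₂ j then .inl (.inr ⟨e, h⟩)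
    else .inr (Classical.choose (by push_neg at h; exact h))

/-- The set of edges of `H` to which an odd number of edges of `C ⊆ E(G)` map. -/
def oddImage (G H : Multigraph) (f : G.E → H.E) (C : Finset G.E) : Finset H.E :=
  Finset.univ.filter (fun e' => Odd ((C.filter (fun e => f e = e')).card))

end Multigraph

/-!
The new edges `x₁x₂` and `y₁y₂` form the cut `δ(V(G₂))` of the 2-join, and a cycle meets every
cut in an even number of edges, so a cycle `C` of the 2-join contains both of them or neither.
Either way, at each vertex `v` of `G₁` the preimage of `C` has the same degree as `C` has at `v`
in the 2-join: `e₁`, which lies in the preimage exactly when `x₁x₂ ∈ C`, replaces the two new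
edges, whose `G₁`-ends are the ends of `e₁`. The mapping from `G₂` is the mapping from `G₂` into
the 2-join taken in the other order, followed by the isomorphism exchanging the two sides.
-/

theorem Finset.mem_iff_mem_of_even_card_filter {α : Type*} [DecidableEq α] {s : Finset α}
    {p : α → Prop} [DecidablePred p] {a b : α} (hp : ∀ x, p x ↔ x = a ∨ x = b)
    (h : Even (s.filter p).card) : a ∈ s ↔ b ∈ s := by
  rw [Finset.filter_congr fun x _ => hp x, Finset.filter_or, Finset.filter_eq', Finset.filter_eq']
    at h
  by_cases ha : a ∈ s <;> by_cases hb : b ∈ s <;> by_cases hab : a = b <;> simp_all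

namespace Multigraph

variable {G H K : Multigraph}

theorem IsCycle.even_card_filter_ne {C : Finset G.E} (hC : G.IsCycle C) (π : G.V → Bool) :
    Even (C.filter fun e => π (G.fst e) ≠ π (G.snd e)).card := by
  have hcross : ∀ e, ∑ v ∈ Finset.univ.filter (π · = true), (G.inc v e : ZMod 2) =
      if π (G.fst e) ≠ π (G.snd e) then 1 else 0 := by
    intro e
    simp only [inc, Nat.cast_add, Nat.cast_ite, Nat.cast_one, Nat.cast_zero,
      Finset.sum_add_distrib, Finset.sum_ite_eq, Finset.mem_filter, Finset.mem_univ, true_and]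
    generalize π (G.fst e) = a, π (G.snd e) = b
    revert a b
    decide
  rw [← ZMod.natCast_eq_zero_iff_even, ← Finset.sum_boole]
  simp_rw [← hcross]
  rw [Finset.sum_comm]
  exact Finset.sum_eq_zero fun v _ => by exact_mod_cast (hC v).natCast_zmod_two

theorem CycleContinuous.comp {f : G.E → H.E} {g : H.E → K.E} (hf : CycleContinuous G H f)
    (hg : CycleContinuous H K g) : CycleContinuous G K (g ∘ f) := by
  intro C hC
  have : preim (g ∘ f) C = preim f (preim g C) := by ext; simp [preim]
  exact this ▸ hf _ (hg C hC)

theorem Iso.inc_map (σ : Iso G H) (v : G.V) (e : G.E) :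
    H.inc (σ.φ v) (σ.ε e) = G.inc v e := by
  rcases σ.ends e with ⟨h₁, h₂⟩ | ⟨h₁, h₂⟩ <;>
    simp only [inc, ← h₁, ← h₂, σ.φ.injective.eq_iff]
  exact add_comm _ _

theorem Iso.cycleContinuous (σ : Iso G H) : CycleContinuous G H σ.ε := by
  intro C hC v
  have : ∑ e ∈ preim σ.ε C, G.inc v e = ∑ e ∈ C, H.inc (σ.φ v) e :=
    Finset.sum_equiv σ.ε (by simp [preim]) fun e _ => (σ.inc_map v e).symm
  exact this ▸ hC (σ.φ v)

variable {G₁ G₂ : Multigraph} {e₁ : G₁.E} {e₂ : G₂.E}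

variable (G₁ G₂ e₁ e₂) in
/-- Unlike `Sum.inr b`, whose type is the unfolded edge type, this term has type
`(twoJoin G₁ G₂ e₁ e₂).E` syntactically, so statements about it stay usable by `rw` and `simp`. -/
def twoJoinNewEdge (b : Bool) : (twoJoin G₁ G₂ e₁ e₂).E := .inr b

theorem isRight_fst_ne_isRight_snd_twoJoin {e : (twoJoin G₁ G₂ e₁ e₂).E} :
    Sum.isRight ((twoJoin G₁ G₂ e₁ e₂).fst e) ≠ Sum.isRight ((twoJoin G₁ G₂ e₁ e₂).snd e) ↔
      e = twoJoinNewEdge G₁ G₂ e₁ e₂ false ∨ e = twoJoinNewEdge G₁ G₂ e₁ e₂ true := by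
  rcases e with (a | b) | (_ | _) <;> simp [twoJoin, twoJoinNewEdge]

theorem IsCycle.twoJoinNewEdge_mem_iff {C : Finset (twoJoin G₁ G₂ e₁ e₂).E}
    (hC : (twoJoin G₁ G₂ e₁ e₂).IsCycle C) :
    twoJoinNewEdge G₁ G₂ e₁ e₂ false ∈ C ↔ twoJoinNewEdge G₁ G₂ e₁ e₂ true ∈ C :=
  Finset.mem_iff_mem_of_even_card_filter (fun _ => isRight_fst_ne_isRight_snd_twoJoin)
    (hC.even_card_filter_ne Sum.isRight)

theorem twoJoinMapL_self : twoJoinMapL G₁ G₂ e₁ e₂ e₁ = twoJoinNewEdge G₁ G₂ e₁ e₂ false :=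
  dif_pos rfl

theorem twoJoinMapL_of_ne {a : G₁.E} (h : a ≠ e₁) :
    twoJoinMapL G₁ G₂ e₁ e₂ a = .inl (.inl ⟨a, h⟩) :=
  dif_neg h

theorem twoJoinMapR_self : twoJoinMapR G₁ G₂ e₁ e₂ e₂ = twoJoinNewEdge G₁ G₂ e₁ e₂ false :=
  dif_pos rfl

theorem twoJoinMapR_of_ne {b : G₂.E} (h : b ≠ e₂) :
    twoJoinMapR G₁ G₂ e₁ e₂ b = .inl (.inr ⟨b, h⟩) :=
  dif_neg h

theorem sum_inc_inl_twoJoin (C : Finset (twoJoin G₁ G₂ e₁ e₂).E) (v : G₁.V) :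
    ∑ e ∈ C, (twoJoin G₁ G₂ e₁ e₂).inc (.inl v) e =
      ∑ a : {a // a ≠ e₁}, (if twoJoinMapL G₁ G₂ e₁ e₂ a ∈ C then G₁.inc v a else 0) +
        ((if twoJoinNewEdge G₁ G₂ e₁ e₂ false ∈ C then if G₁.fst e₁ = v then 1 else 0 else 0) +
          (if twoJoinNewEdge G₁ G₂ e₁ e₂ true ∈ C then if G₁.snd e₁ = v then 1 else 0 else 0)) := by
  rw [← Finset.sum_ite_mem_eq]
  refine (Fintype.sum_sum_type _).trans ?_
  rw [Fintype.sum_sum_type, Fintype.sum_bool]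
  simp only [inc, twoJoin, twoJoinNewEdge, Sum.inl.injEq, reduceCtorEq, ↓reduceIte, add_zero,
    ite_self, Finset.sum_const_zero, add_comm, zero_add]
  congr 1
  exact Finset.sum_congr rfl fun a _ => by rw [twoJoinMapL_of_ne a.2]

theorem sum_preim_twoJoinMapL_inc (C : Finset (twoJoin G₁ G₂ e₁ e₂).E) (v : G₁.V) :
    ∑ a ∈ preim (twoJoinMapL G₁ G₂ e₁ e₂) C, G₁.inc v a =
      ∑ a : {a // a ≠ e₁}, (if twoJoinMapL G₁ G₂ e₁ e₂ a ∈ C then G₁.inc v a else 0) +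
        (if twoJoinNewEdge G₁ G₂ e₁ e₂ false ∈ C then G₁.inc v e₁ else 0) := by
  rw [preim, Finset.sum_filter, Fintype.sum_eq_add_sum_subtype_ne _ e₁, add_comm, twoJoinMapL_self]

theorem cycleContinuous_twoJoinMapL :
    CycleContinuous G₁ (twoJoin G₁ G₂ e₁ e₂) (twoJoinMapL G₁ G₂ e₁ e₂) := by
  intro C hC v
  have hsum : ∑ a ∈ preim (twoJoinMapL G₁ G₂ e₁ e₂) C, G₁.inc v a =
      ∑ e ∈ C, (twoJoin G₁ G₂ e₁ e₂).inc (.inl v) e := by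
    rw [sum_preim_twoJoinMapL_inc, sum_inc_inl_twoJoin, add_right_inj]
    by_cases hf : twoJoinNewEdge G₁ G₂ e₁ e₂ false ∈ C
    · simp [hf, hC.twoJoinNewEdge_mem_iff.mp hf, inc]
    · simp [hf, mt hC.twoJoinNewEdge_mem_iff.mpr hf]
  exact hsum ▸ hC (.inl v)

variable (G₁ G₂ e₁ e₂) in
def twoJoinComm : Iso (twoJoin G₂ G₁ e₂ e₁) (twoJoin G₁ G₂ e₁ e₂) where
  φ := Equiv.sumComm _ _
  ε := (Equiv.sumComm _ _).sumCongr (Equiv.refl Bool)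
  ends
    | .inl (.inl _) => .inl ⟨rfl, rfl⟩
    | .inl (.inr _) => .inl ⟨rfl, rfl⟩
    | .inr false => .inr ⟨rfl, rfl⟩
    | .inr true => .inr ⟨rfl, rfl⟩

theorem twoJoinMapR_eq_comp :
    twoJoinMapR G₁ G₂ e₁ e₂ = (twoJoinComm G₁ G₂ e₁ e₂).ε ∘ twoJoinMapL G₂ G₁ e₂ e₁ := by
  funext b
  rw [Function.comp_apply]
  rcases eq_or_ne b e₂ with rfl | h
  · rw [twoJoinMapR_self, twoJoinMapL_self]
    rfl
  · rw [twoJoinMapR_of_ne h, twoJoinMapL_of_ne h]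
    rfl

end Multigraph

open Multigraph in
/-- both natural mappings into a 2-join (identity away from the deleted
edge, the deleted edge going to the new edge `x₁x₂`) are cycle-continuous. -/
theorem twoJoin_inclusions (G₁ G₂ : Multigraph) (e₁ : G₁.E) (e₂ : G₂.E) :
    CycleContinuous G₁ (twoJoin G₁ G₂ e₁ e₂) (twoJoinMapL G₁ G₂ e₁ e₂) ∧
    CycleContinuous G₂ (twoJoin G₁ G₂ e₁ e₂) (twoJoinMapR G₁ G₂ e₁ e₂) := by
  refine ⟨cycleContinuous_twoJoinMapL, ?_⟩
  rw [twoJoinMapR_eq_comp]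
  exact cycleContinuous_twoJoinMapL.comp (twoJoinComm G₁ G₂ e₁ e₂).cycleContinuous
end

section
/- Let G₁, G₂ be graphs with chosen vertices u₁, u₂ of degree 3, and let G₁≡G₂ be a 3-join: delete uᵢ from each Gᵢ and add a perfect matching between the former neighbors of u₁ and the former neighbors of u₂. Then for each i ∈ {1,2}, the natural mapping E(Gᵢ) → E(G₁≡G₂) (identity on edges not incident with uᵢ, and sending each edge uᵢw to the added matching edge at w) is cycle-continuous. -/
/-! The natural map `E(G₁) → E(G₁ ≡ G₂)` is injective, and `G₁` is recovered from the 3-join by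
contracting the whole `G₂` side onto `u₁` and deleting the resulting loops (the edges of `G₂`).
So for a cycle `C` of the join and a vertex `v` of `G₁`, the degree of `v` in the preimage of `C`
is the number of ends of edges of `C` in the fibre over `v`, up to the even contribution of
those loops; and that number is even, being a sum of degrees in `C`. -/

namespace Multigraph

theorem sum_inc (G : Multigraph) (S : Finset G.V) (e : G.E) :
    ∑ w ∈ S, G.inc w e = (if G.fst e ∈ S then 1 else 0) + (if G.snd e ∈ S then 1 else 0) := by
  simp only [inc, Finset.sum_add_distrib, Finset.sum_ite_eq]

theorem cycleContinuous_of_sum_inc {G H : Multigraph} (f : G.E → H.E)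
    (hf : Function.Injective f)
    (hS : ∀ v, ∃ S : Finset H.V, (∀ e, G.inc v e = ∑ w ∈ S, H.inc w (f e)) ∧
      ∀ E ∉ Set.range f, Even (∑ w ∈ S, H.inc w E)) :
    CycleContinuous G H f := by
  classical
  intro C hC v
  obtain ⟨S, hinc, heven⟩ := hS v
  set g : H.E → ℕ := fun E => ∑ w ∈ S, H.inc w E
  have himage : (preim f C).image f = C.filter (· ∈ Set.range f) := by
    ext E
    simp only [preim, Finset.mem_image, Finset.mem_filter, Finset.mem_univ, true_and,
      Set.mem_range]
    constructor
    · rintro ⟨e, he, rfl⟩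
      exact ⟨he, e, rfl⟩
    · rintro ⟨hE, e, rfl⟩
      exact ⟨e, hE, rfl⟩
  have hpre : ∑ e ∈ preim f C, G.inc v e = ∑ E ∈ C.filter (· ∈ Set.range f), g E := by
    rw [← himage, Finset.sum_image fun _ _ _ _ h => hf h]
    exact Finset.sum_congr rfl fun e _ => hinc e
  have htotal : Even (∑ E ∈ C, g E) := by
    rw [Finset.sum_comm]
    exact Finset.even_sum _ fun w _ => hC w
  rw [← Finset.sum_filter_add_sum_filter_not C (· ∈ Set.range f)] at htotal
  rw [hpre]
  exact (Nat.even_add.mp htotal).mpr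
    (Finset.even_sum _ fun E hE => heven E (Finset.mem_filter.mp hE).2)

/-- The hypotheses say that `G` is obtained from `H` by identifying vertices along `π` and
deleting the edges outside the image of `f`, which have become loops. -/
theorem cycleContinuous_of_projection {G H : Multigraph} (f : G.E → H.E)
    (hf : Function.Injective f) (π : H.V → G.V)
    (hends : ∀ e, s(π (H.fst (f e)), π (H.snd (f e))) = s(G.fst e, G.snd e))
    (hloop : ∀ E ∉ Set.range f, π (H.fst E) = π (H.snd E)) :
    CycleContinuous G H f := by
  refine cycleContinuous_of_sum_inc f hf fun v => ⟨Finset.univ.filter (π · = v), ?_, ?_⟩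
  · intro e
    rw [sum_inc]
    simp only [Finset.mem_filter, Finset.mem_univ, true_and]
    rcases Sym2.eq_iff.mp (hends e) with ⟨h1, h2⟩ | ⟨h1, h2⟩
    · rw [inc, h1, h2]
    · rw [inc, h1, h2, add_comm]
  · intro E hE
    rw [sum_inc]
    simp only [Finset.mem_filter, Finset.mem_univ, true_and, hloop E hE]
    exact ⟨_, rfl⟩

theorem sym2_otherEnd_eq (G : Multigraph) {u : G.V} {e : G.E} (h : G.inc u e = 1) :
    s(u, G.otherEnd u e) = s(G.fst e, G.snd e) := by
  unfold otherEnd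
  by_cases hf : G.fst e = u
  · rw [if_pos hf, hf]
  · by_cases hs : G.snd e = u
    · rw [if_neg hf, hs, Sym2.eq_swap]
    · simp [inc, hf, hs] at h

section ThreeJoin

variable {G₁ G₂ : Multigraph} {u₁ : G₁.V} {u₂ : G₂.V} {a₁ : Fin 3 → G₁.E} {a₂ : Fin 3 → G₂.E}
  {h₁ : ∀ j, G₁.inc u₁ (a₁ j) = 1} {h₂ : ∀ j, G₂.inc u₂ (a₂ j) = 1}
  {hz₁ : ∀ e, (∀ j, e ≠ a₁ j) → G₁.inc u₁ e = 0} {hz₂ : ∀ e, (∀ j, e ≠ a₂ j) → G₂.inc u₂ e = 0}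

local notation "𝒥" => threeJoin G₁ G₂ u₁ u₂ a₁ a₂ h₁ h₂ hz₁ hz₂
local notation "ι₁" => threeJoinMapL G₁ G₂ u₁ u₂ a₁ a₂ h₁ h₂ hz₁ hz₂
local notation "ι₂" => threeJoinMapR G₁ G₂ u₁ u₂ a₁ a₂ h₁ h₂ hz₁ hz₂

theorem threeJoinMapL_of_forall_ne {e : G₁.E} (he : ∀ j, e ≠ a₁ j) :
    ι₁ e = .inl (.inl ⟨e, he⟩) :=
  dif_pos he

theorem threeJoinMapL_apply (ha₁ : Function.Injective a₁) (j : Fin 3) : ι₁ (a₁ j) = .inr j :=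
  (dif_neg fun h => h j rfl).trans
    (congrArg Sum.inr (ha₁ (Classical.choose_spec (⟨j, rfl⟩ : ∃ j', a₁ j = a₁ j'))).symm)

theorem threeJoinMapL_leftInverse (ha₁ : Function.Injective a₁) :
    Function.LeftInverse (Sum.elim (Sum.elim Subtype.val fun _ => a₁ 0) a₁) ι₁ := by
  intro e
  by_cases he : ∀ j, e ≠ a₁ j
  · rw [threeJoinMapL_of_forall_ne he]
    rfl
  · push Not at he
    obtain ⟨j, rfl⟩ := he
    rw [threeJoinMapL_apply ha₁]
    rfl

theorem cycleContinuous_threeJoinMapL (ha₁ : Function.Injective a₁) :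
    CycleContinuous G₁ 𝒥 ι₁ := by
  refine cycleContinuous_of_projection _ (threeJoinMapL_leftInverse ha₁).injective
    (Sum.elim Subtype.val fun _ => u₁) (fun e => ?_) (fun E hE => ?_)
  · by_cases he : ∀ j, e ≠ a₁ j
    · rw [threeJoinMapL_of_forall_ne he]
      rfl
    · push Not at he
      obtain ⟨j, rfl⟩ := he
      rw [threeJoinMapL_apply ha₁]
      exact Sym2.eq_swap.trans (sym2_otherEnd_eq G₁ (h₁ j))
  · rcases E with (a | b) | j
    · exact absurd ⟨a.1, threeJoinMapL_of_forall_ne a.2⟩ hE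
    · rfl
    · exact absurd ⟨a₁ j, threeJoinMapL_apply ha₁ j⟩ hE

theorem threeJoinMapR_of_forall_ne {e : G₂.E} (he : ∀ j, e ≠ a₂ j) :
    ι₂ e = .inl (.inr ⟨e, he⟩) :=
  dif_pos he

theorem threeJoinMapR_apply (ha₂ : Function.Injective a₂) (j : Fin 3) : ι₂ (a₂ j) = .inr j :=
  (dif_neg fun h => h j rfl).trans
    (congrArg Sum.inr (ha₂ (Classical.choose_spec (⟨j, rfl⟩ : ∃ j', a₂ j = a₂ j'))).symm)

theorem threeJoinMapR_leftInverse (ha₂ : Function.Injective a₂) :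
    Function.LeftInverse (Sum.elim (Sum.elim (fun _ => a₂ 0) Subtype.val) a₂) ι₂ := by
  intro e
  by_cases he : ∀ j, e ≠ a₂ j
  · rw [threeJoinMapR_of_forall_ne he]
    rfl
  · push Not at he
    obtain ⟨j, rfl⟩ := he
    rw [threeJoinMapR_apply ha₂]
    rfl

theorem cycleContinuous_threeJoinMapR (ha₂ : Function.Injective a₂) :
    CycleContinuous G₂ 𝒥 ι₂ := by
  refine cycleContinuous_of_projection _ (threeJoinMapR_leftInverse ha₂).injective
    (Sum.elim (fun _ => u₂) Subtype.val) (fun e => ?_) (fun E hE => ?_)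
  · by_cases he : ∀ j, e ≠ a₂ j
    · rw [threeJoinMapR_of_forall_ne he]
      rfl
    · push Not at he
      obtain ⟨j, rfl⟩ := he
      rw [threeJoinMapR_apply ha₂]
      exact sym2_otherEnd_eq G₂ (h₂ j)
  · rcases E with (a | b) | j
    · rfl
    · exact absurd ⟨b.1, threeJoinMapR_of_forall_ne b.2⟩ hE
    · exact absurd ⟨a₂ j, threeJoinMapR_apply ha₂ j⟩ hE

end ThreeJoin

end Multigraph

open Multigraph in
theorem threeJoin_inclusions_general (G₁ G₂ : Multigraph) (u₁ : G₁.V) (u₂ : G₂.V)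
    (a₁ : Fin 3 → G₁.E) (a₂ : Fin 3 → G₂.E)
    (ha₁ : Function.Injective a₁) (ha₂ : Function.Injective a₂)
    (h₁ : ∀ j, G₁.inc u₁ (a₁ j) = 1) (h₂ : ∀ j, G₂.inc u₂ (a₂ j) = 1)
    (hz₁ : ∀ e, (∀ j, e ≠ a₁ j) → G₁.inc u₁ e = 0)
    (hz₂ : ∀ e, (∀ j, e ≠ a₂ j) → G₂.inc u₂ e = 0) :
    CycleContinuous G₁ (threeJoin G₁ G₂ u₁ u₂ a₁ a₂ h₁ h₂ hz₁ hz₂)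
      (threeJoinMapL G₁ G₂ u₁ u₂ a₁ a₂ h₁ h₂ hz₁ hz₂) ∧
    CycleContinuous G₂ (threeJoin G₁ G₂ u₁ u₂ a₁ a₂ h₁ h₂ hz₁ hz₂)
      (threeJoinMapR G₁ G₂ u₁ u₂ a₁ a₂ h₁ h₂ hz₁ hz₂) :=
  ⟨cycleContinuous_threeJoinMapL ha₁, cycleContinuous_threeJoinMapR ha₂⟩

open Multigraph in
/-- both natural mappings into a 3-join are cycle-continuous. -/
theorem threeJoin_inclusions (G₁ G₂ : Multigraph) (u₁ : G₁.V) (u₂ : G₂.V)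
    (a₁ : Fin 3 → G₁.E) (a₂ : Fin 3 → G₂.E)
    (ha₁ : Function.Injective a₁) (ha₂ : Function.Injective a₂)
    (h₁ : ∀ j, G₁.inc u₁ (a₁ j) = 1) (h₂ : ∀ j, G₂.inc u₂ (a₂ j) = 1)
    (hz₁ : ∀ e, (∀ j, e ≠ a₁ j) → G₁.inc u₁ e = 0)
    (hz₂ : ∀ e, (∀ j, e ≠ a₂ j) → G₂.inc u₂ e = 0)
    (hn₁ : Function.Injective (fun j => G₁.otherEnd u₁ (a₁ j)))
    (hn₂ : Function.Injective (fun j => G₂.otherEnd u₂ (a₂ j))) :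
    CycleContinuous G₁ (threeJoin G₁ G₂ u₁ u₂ a₁ a₂ h₁ h₂ hz₁ hz₂)
      (threeJoinMapL G₁ G₂ u₁ u₂ a₁ a₂ h₁ h₂ hz₁ hz₂) ∧
    CycleContinuous G₂ (threeJoin G₁ G₂ u₁ u₂ a₁ a₂ h₁ h₂ hz₁ hz₂)
      (threeJoinMapR G₁ G₂ u₁ u₂ a₁ a₂ h₁ h₂ hz₁ hz₂) :=
  threeJoin_inclusions_general G₁ G₂ u₁ u₂ a₁ a₂ ha₁ ha₂ h₁ h₂ hz₁ hz₂
end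

section
/- If G is a graph, e ∈ E(G), and the graph obtained from G by deleting e admits a cycle-continuous mapping to K₂³, and H is any graph obtained from G − e by a sequence of 2-joins and 3-joins with graphs each admitting a cycle-continuous mapping to K₂³, then H admits a cycle-continuous mapping to K₂³. -/
namespace Multigraph

/-- `JoinClosure A H`: `H` is obtained from `A` by a sequence of 2-joins and 3-joins
with graphs each admitting a cycle-continuous mapping to `K₂³`. -/
inductive JoinClosure : Multigraph → Multigraph → Prop
  | base (G : Multigraph) : JoinClosure G G
  | twoL (A G G' : Multigraph) (e : G.E) (e' : G'.E) :
      JoinClosure A G → (∃ f : G'.E → K23.E, CycleContinuous G' K23 f) →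
      JoinClosure A (twoJoin G G' e e')
  | twoR (A G G' : Multigraph) (e' : G'.E) (e : G.E) :
      JoinClosure A G → (∃ f : G'.E → K23.E, CycleContinuous G' K23 f) →
      JoinClosure A (twoJoin G' G e' e)
  | threeL (A G G' : Multigraph) (u : G.V) (u' : G'.V)
      (a : Fin 3 → G.E) (a' : Fin 3 → G'.E)
      (h : ∀ j, G.inc u (a j) = 1) (h' : ∀ j, G'.inc u' (a' j) = 1)
      (hz : ∀ e, (∀ j, e ≠ a j) → G.inc u e = 0)
      (hz' : ∀ e, (∀ j, e ≠ a' j) → G'.inc u' e = 0) :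
      JoinClosure A G → (∃ f : G'.E → K23.E, CycleContinuous G' K23 f) →
      JoinClosure A (threeJoin G G' u u' a a' h h' hz hz')
  | threeR (A G G' : Multigraph) (u' : G'.V) (u : G.V)
      (a' : Fin 3 → G'.E) (a : Fin 3 → G.E)
      (h' : ∀ j, G'.inc u' (a' j) = 1) (h : ∀ j, G.inc u (a j) = 1)
      (hz' : ∀ e, (∀ j, e ≠ a' j) → G'.inc u' e = 0)
      (hz : ∀ e, (∀ j, e ≠ a j) → G.inc u e = 0) :
      JoinClosure A G → (∃ f : G'.E → K23.E, CycleContinuous G' K23 f) →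
      JoinClosure A (threeJoin G' G u' u a' a h' h hz' hz)

end Multigraph

section ColorParity

open Finset

def ParityConstant {ι : Type*} (d : ι → ℕ) : Prop := ∀ i j, Even (d i + d j)

lemma ParityConstant.comp {ι κ : Type*} {d : ι → ℕ} (hd : ParityConstant d) (σ : κ → ι) :
    ParityConstant (d ∘ σ) :=
  fun i j => hd (σ i) (σ j)

lemma ParityConstant.add_of_add_add {ι : Type*} {r s t : ι → ℕ}
    (hrs : ParityConstant (r + s)) (hst : ParityConstant (s + t)) : ParityConstant (r + t) := by
  intro i j
  have h₁ := hrs i j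
  have h₂ := hst i j
  simp only [Pi.add_apply, Nat.even_iff] at h₁ h₂ ⊢
  omega

lemma Fin3.not_parityConstant_indicator :
    ∀ k : Fin 3, ¬ ParityConstant (fun i => if k = i then 1 else 0) := by
  unfold ParityConstant; decide

lemma Fin3.eq_of_parityConstant_indicator_add_indicator : ∀ k l : Fin 3,
    ParityConstant (fun i => (if k = i then 1 else 0) + if l = i then 1 else 0) → k = l := by
  unfold ParityConstant; decide

lemma Fin3.bijective_of_parityConstant_fiber_card : ∀ φ : Fin 3 → Fin 3,
    ParityConstant (fun i => ∑ j, if φ j = i then 1 else 0) → Function.Bijective φ := by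
  unfold ParityConstant; decide

lemma Fin3.exists_third : ∀ j₀ j₁ : Fin 3, j₀ ≠ j₁ →
    ∃ j₂, j₂ ≠ j₀ ∧ j₂ ≠ j₁ ∧ ∀ j, j = j₀ ∨ j = j₁ ∨ j = j₂ := by
  decide

def colorSum {E C : Type*} [DecidableEq C] (S : Finset E) (f : E → C) (x : E → ℕ) (i : C) : ℕ :=
  ∑ e ∈ S, if f e = i then x e else 0

lemma colorSum_perm {E C : Type*} [DecidableEq C] (S : Finset E) (f : E → C) (x : E → ℕ)
    (σ : Equiv.Perm C) : colorSum S (σ ∘ f) x = colorSum S f x ∘ σ.symm := by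
  ext i
  simp only [colorSum, Function.comp_apply, ← Equiv.eq_symm_apply]

lemma ParityConstant.colorSum_perm {E C : Type*} [DecidableEq C] {S : Finset E} {f : E → C}
    {x : E → ℕ} (h : ParityConstant (colorSum S f x)) (σ : Equiv.Perm C) :
    ParityConstant (colorSum S (σ ∘ f) x) := by
  rw [_root_.colorSum_perm]
  exact h.comp _

lemma colorSum_univ_eq_subtype_add_image {E C : Type*} [Fintype E] [DecidableEq E]
    [DecidableEq C] (a : Fin 3 → E) (f : E → C) (x : E → ℕ) :
    colorSum univ f x = colorSum (univ : Finset {e // ∀ j, e ≠ a j}) (f ∘ Subtype.val)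
      (x ∘ Subtype.val) + colorSum (univ.image a) f x := by
  ext i
  simp only [colorSum, Pi.add_apply, Function.comp_apply]
  rw [← Fintype.sum_subtype_add_sum_subtype (fun e => ∀ j, e ≠ a j),
    sum_subtype (univ.image a) (p := fun e => ¬ ∀ j, e ≠ a j) (by simp [eq_comm])]

section Star

variable {E : Type*} [DecidableEq E] (a : Fin 3 → E) (f : E → Fin 3)

lemma exists_perm_parityConstant_of_injective (ha : Function.Injective a)
    (hf : ParityConstant (colorSum (univ.image a) f 1)) :
    ∃ σ : Equiv.Perm (Fin 3), ∀ x : E → ℕ,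
      ParityConstant (colorSum (univ.image a) (σ ∘ f) x + x ∘ a) := by
  have hsum : ∀ (g : E → Fin 3) (x : E → ℕ),
      colorSum (univ.image a) g x = fun i => ∑ j, if g (a j) = i then x (a j) else 0 :=
    fun g x => funext fun i => sum_image ha.injOn
  rw [hsum] at hf
  let τ := Equiv.ofBijective (f ∘ a) (Fin3.bijective_of_parityConstant_fiber_card _ hf)
  refine ⟨τ.symm, fun x i j => ?_⟩
  have hτ : ∀ j, τ.symm (f (a j)) = j := fun j => τ.symm_apply_apply j
  simp only [hsum, Pi.add_apply, Function.comp_apply, hτ, sum_ite_eq', mem_univ, if_true]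
  exact ⟨x (a i) + x (a j), by ring⟩

lemma exists_perm_parityConstant_of_not_injective (ha : ¬ Function.Injective a)
    (hf : ParityConstant (colorSum (univ.image a) f 1)) :
    ∃ σ : Equiv.Perm (Fin 3), ∀ x : E → ℕ,
      ParityConstant (colorSum (univ.image a) (σ ∘ f) x + x ∘ a) := by
  obtain ⟨j₀, j₁, h₀₁, hne⟩ := Function.not_injective_iff.mp ha
  obtain ⟨j₂, h₂₀, h₂₁, hcover⟩ := Fin3.exists_third j₀ j₁ hne
  have himage : univ.image a = {a j₀, a j₂} := by
    ext e
    simp only [mem_image, mem_univ, true_and, mem_insert, mem_singleton]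
    constructor
    · rintro ⟨j, rfl⟩
      rcases hcover j with rfl | rfl | rfl <;> simp [h₀₁]
    · rintro (rfl | rfl) <;> exact ⟨_, rfl⟩
  rw [himage] at hf ⊢
  have ha₂ : a j₀ ≠ a j₂ := by
    intro h
    rw [h, insert_eq_of_mem (mem_singleton_self _)] at hf
    exact Fin3.not_parityConstant_indicator (f (a j₂)) fun i j => by
      simpa only [colorSum, sum_singleton, Pi.one_apply] using hf i j
  have hf₂ : f (a j₀) = f (a j₂) :=
    Fin3.eq_of_parityConstant_indicator_add_indicator _ _ fun i j => by
      simpa [colorSum, sum_pair ha₂] using hf i j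
  refine ⟨Equiv.swap (f (a j₀)) j₂, fun x i j => ?_⟩
  -- `a j₀` meets every colour once (its own colour, and `j₀`, `j₁` as matching edges),
  -- `a j₂` meets colour `j₂` twice
  have hval : ∀ i, (colorSum {a j₀, a j₂} (Equiv.swap (f (a j₀)) j₂ ∘ f) x + x ∘ a) i =
      x (a j₀) + 2 * if j₂ = i then x (a j₂) else 0 := by
    intro i
    simp only [colorSum, sum_pair ha₂, Pi.add_apply, Function.comp_apply, ← hf₂,
      Equiv.swap_apply_left]
    rcases hcover i with rfl | rfl | rfl
    · simp [h₂₀]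
    · simp [h₂₁, h₀₁]
    · simp only [↓reduceIte]; ring
  rw [hval, hval]
  exact ⟨x (a j₀) + (if j₂ = i then x (a j₂) else 0) + (if j₂ = j then x (a j₂) else 0), by ring⟩

lemma exists_perm_parityConstant_colorSum_image (hf : ParityConstant (colorSum (univ.image a) f 1)) :
    ∃ σ : Equiv.Perm (Fin 3), ∀ x : E → ℕ,
      ParityConstant (colorSum (univ.image a) (σ ∘ f) x + x ∘ a) := by
  by_cases ha : Function.Injective a
  · exact exists_perm_parityConstant_of_injective a f ha hf
  · exact exists_perm_parityConstant_of_not_injective a f ha hf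

end Star

end ColorParity

namespace Multigraph

open Finset

section K23

variable {G : Multigraph}

lemma sum_preim_inc {C : Type} [DecidableEq C] (f : G.E → C) (S : Finset C) (v : G.V) :
    ∑ e ∈ preim f S, G.inc v e = ∑ i ∈ S, colorSum univ f (G.inc v) i := by
  simp only [colorSum, preim, sum_filter]
  rw [sum_comm]
  simp

lemma inc_K23 (v : K23.V) (e : K23.E) : K23.inc v e = 1 := by
  cases v <;> rfl

lemma isCycle_K23_iff (C : Finset (Fin 3)) : K23.IsCycle C ↔ Even C.card := by
  simp only [IsCycle, inc_K23]
  rw [card_eq_sum_ones]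
  exact ⟨fun h => h false, fun h _ => h⟩

theorem cycleContinuous_K23_iff (f : G.E → Fin 3) :
    CycleContinuous G K23 f ↔ ∀ v, ParityConstant (colorSum univ f (G.inc v)) := by
  change (∀ C : Finset (Fin 3), K23.IsCycle C → G.IsCycle (preim f C)) ↔ _
  simp only [isCycle_K23_iff]
  simp only [IsCycle, sum_preim_inc]
  constructor
  · intro h v i j
    rcases eq_or_ne i j with rfl | hij
    · exact Even.add_self _
    · simpa [sum_pair hij] using h {i, j} (by rw [card_pair hij]; decide) v
  · intro h C hC v
    have hC3 : C.card ≤ 3 := card_le_univ C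
    interval_cases hcard : C.card
    · simp [card_eq_zero.mp hcard]
    · exact absurd hC (by decide)
    · obtain ⟨i, j, hij, rfl⟩ := card_eq_two.mp hcard
      simpa [sum_pair hij] using h v i j
    · exact absurd hC (by decide)

end K23

def HasCycleContinuousMap (G H : Multigraph) : Prop := ∃ f : G.E → H.E, CycleContinuous G H f

def twoJoinColoring {C : Type*} {G₁ G₂ : Multigraph} (e₁ : G₁.E) (e₂ : G₂.E)
    (f₁ : G₁.E → C) (f₂ : G₂.E → C) (k : C) : (twoJoin G₁ G₂ e₁ e₂).E → C :=
  Sum.elim (Sum.elim (f₁ ∘ Subtype.val) (f₂ ∘ Subtype.val)) fun _ => k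

section TwoJoin

variable {C : Type*} [DecidableEq C] {G₁ G₂ : Multigraph} (e₁ : G₁.E) (e₂ : G₂.E)
  (f₁ : G₁.E → C) (f₂ : G₂.E → C)

lemma colorSum_twoJoinColoring_inl (v : G₁.V) :
    colorSum univ (twoJoinColoring e₁ e₂ f₁ f₂ (f₁ e₁)) ((twoJoin G₁ G₂ e₁ e₂).inc (.inl v)) =
      colorSum univ f₁ (G₁.inc v) := by
  ext i
  simp only [colorSum, Fintype.sum_eq_add_sum_subtype_ne _ e₁]
  erw [Fintype.sum_sum_type, Fintype.sum_sum_type, Fintype.sum_bool]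
  simp only [ne_eq, twoJoinColoring, Sum.elim_inl, Function.comp_apply, inc, twoJoin,
    Sum.inl.injEq, Sum.elim_inr, reduceCtorEq, ↓reduceIte, add_zero, ite_self, sum_const_zero]
  split_ifs <;> omega

lemma colorSum_twoJoinColoring_inr (v : G₂.V) :
    colorSum univ (twoJoinColoring e₁ e₂ f₁ f₂ (f₂ e₂)) ((twoJoin G₁ G₂ e₁ e₂).inc (.inr v)) =
      colorSum univ f₂ (G₂.inc v) := by
  ext i
  simp only [colorSum, Fintype.sum_eq_add_sum_subtype_ne _ e₂]
  erw [Fintype.sum_sum_type, Fintype.sum_sum_type, Fintype.sum_bool]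
  simp only [ne_eq, twoJoinColoring, Sum.elim_inl, Function.comp_apply, inc, twoJoin,
    reduceCtorEq, ↓reduceIte, add_zero, ite_self, sum_const_zero, Sum.elim_inr, Sum.inr.injEq,
    zero_add]
  split_ifs <;> omega

end TwoJoin

theorem HasCycleContinuousMap.twoJoin {G₁ G₂ : Multigraph} (e₁ : G₁.E) (e₂ : G₂.E)
    (h₁ : G₁.HasCycleContinuousMap K23) (h₂ : G₂.HasCycleContinuousMap K23) :
    (twoJoin G₁ G₂ e₁ e₂).HasCycleContinuousMap K23 := by
  obtain ⟨(f₁ : G₁.E → Fin 3), hf₁⟩ := h₁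
  obtain ⟨(f₂ : G₂.E → Fin 3), hf₂⟩ := h₂
  rw [cycleContinuous_K23_iff] at hf₁ hf₂
  set σ := Equiv.swap (f₂ e₂) (f₁ e₁)
  have hσ : (σ ∘ f₂) e₂ = f₁ e₁ := Equiv.swap_apply_left _ _
  refine ⟨twoJoinColoring (C := Fin 3) e₁ e₂ f₁ (σ ∘ f₂) (f₁ e₁), (cycleContinuous_K23_iff _).2 ?_⟩
  rintro (v | v)
  · rw [colorSum_twoJoinColoring_inl]
    exact hf₁ v
  · rw [← hσ, colorSum_twoJoinColoring_inr]
    exact (hf₂ v).colorSum_perm σ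

lemma inc_eq_ite_otherEnd (G : Multigraph) {u v : G.V} {e : G.E} (he : G.inc u e = 1)
    (hv : v ≠ u) : G.inc v e = if G.otherEnd u e = v then 1 else 0 := by
  unfold inc at he ⊢
  unfold otherEnd
  split_ifs at he ⊢ <;> simp_all

section ThreeJoin

variable {G₁ G₂ : Multigraph} {u₁ : G₁.V} {u₂ : G₂.V} {a₁ : Fin 3 → G₁.E} {a₂ : Fin 3 → G₂.E}
  (h₁ : ∀ j, G₁.inc u₁ (a₁ j) = 1) (h₂ : ∀ j, G₂.inc u₂ (a₂ j) = 1)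
  (hz₁ : ∀ e, (∀ j, e ≠ a₁ j) → G₁.inc u₁ e = 0) (hz₂ : ∀ e, (∀ j, e ≠ a₂ j) → G₂.inc u₂ e = 0)

def threeJoinColoring (f₁ : G₁.E → Fin 3) (f₂ : G₂.E → Fin 3) :
    (threeJoin G₁ G₂ u₁ u₂ a₁ a₂ h₁ h₂ hz₁ hz₂).E → Fin 3 :=
  Sum.elim (Sum.elim (f₁ ∘ Subtype.val) (f₂ ∘ Subtype.val)) id

variable (f₁ : G₁.E → Fin 3) (f₂ : G₂.E → Fin 3)

lemma colorSum_threeJoinColoring_inl (v : G₁.V) (hv : v ≠ u₁) :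
    colorSum univ (threeJoinColoring h₁ h₂ hz₁ hz₂ f₁ f₂)
        ((threeJoin G₁ G₂ u₁ u₂ a₁ a₂ h₁ h₂ hz₁ hz₂).inc (.inl ⟨v, hv⟩)) =
      colorSum (univ : Finset {e // ∀ j, e ≠ a₁ j}) (f₁ ∘ Subtype.val)
        (G₁.inc v ∘ Subtype.val) + G₁.inc v ∘ a₁ := by
  ext i
  rw [Pi.add_apply, Function.comp_apply, inc_eq_ite_otherEnd G₁ (h₁ i) hv, colorSum]
  erw [Fintype.sum_sum_type, Fintype.sum_sum_type]
  simp [threeJoinColoring, threeJoin, inc, colorSum]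

lemma colorSum_threeJoinColoring_inr (v : G₂.V) (hv : v ≠ u₂) :
    colorSum univ (threeJoinColoring h₁ h₂ hz₁ hz₂ f₁ f₂)
        ((threeJoin G₁ G₂ u₁ u₂ a₁ a₂ h₁ h₂ hz₁ hz₂).inc (.inr ⟨v, hv⟩)) =
      colorSum (univ : Finset {e // ∀ j, e ≠ a₂ j}) (f₂ ∘ Subtype.val)
        (G₂.inc v ∘ Subtype.val) + G₂.inc v ∘ a₂ := by
  ext i
  rw [Pi.add_apply, Function.comp_apply, inc_eq_ite_otherEnd G₂ (h₂ i) hv, colorSum]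
  erw [Fintype.sum_sum_type, Fintype.sum_sum_type]
  simp [threeJoinColoring, threeJoin, inc, colorSum]

end ThreeJoin

lemma colorSum_inc_eq_colorSum_image {C : Type*} [DecidableEq C] (G : Multigraph) {u : G.V}
    {a : Fin 3 → G.E} (h : ∀ j, G.inc u (a j) = 1) (hz : ∀ e, (∀ j, e ≠ a j) → G.inc u e = 0)
    (f : G.E → C) : colorSum univ f (G.inc u) = colorSum (univ.image a) f 1 := by
  have hrest : colorSum (univ : Finset {e // ∀ j, e ≠ a j}) (f ∘ Subtype.val)
      (G.inc u ∘ Subtype.val) = 0 :=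
    funext fun i => sum_eq_zero fun e _ => by simp [hz e.1 e.2]
  rw [colorSum_univ_eq_subtype_add_image a, hrest, zero_add]
  ext i
  refine sum_congr rfl fun e he => ?_
  obtain ⟨j, -, rfl⟩ := mem_image.mp he
  rw [h, Pi.one_apply]

theorem HasCycleContinuousMap.threeJoin {G₁ G₂ : Multigraph} {u₁ : G₁.V} {u₂ : G₂.V}
    {a₁ : Fin 3 → G₁.E} {a₂ : Fin 3 → G₂.E}
    (h₁ : ∀ j, G₁.inc u₁ (a₁ j) = 1) (h₂ : ∀ j, G₂.inc u₂ (a₂ j) = 1)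
    (hz₁ : ∀ e, (∀ j, e ≠ a₁ j) → G₁.inc u₁ e = 0) (hz₂ : ∀ e, (∀ j, e ≠ a₂ j) → G₂.inc u₂ e = 0)
    (hG₁ : G₁.HasCycleContinuousMap K23) (hG₂ : G₂.HasCycleContinuousMap K23) :
    (threeJoin G₁ G₂ u₁ u₂ a₁ a₂ h₁ h₂ hz₁ hz₂).HasCycleContinuousMap K23 := by
  obtain ⟨(f₁ : G₁.E → Fin 3), hf₁⟩ := hG₁
  obtain ⟨(f₂ : G₂.E → Fin 3), hf₂⟩ := hG₂
  rw [cycleContinuous_K23_iff] at hf₁ hf₂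
  obtain ⟨σ₁, hσ₁⟩ := exists_perm_parityConstant_colorSum_image a₁ f₁
    (colorSum_inc_eq_colorSum_image G₁ h₁ hz₁ f₁ ▸ hf₁ u₁)
  obtain ⟨σ₂, hσ₂⟩ := exists_perm_parityConstant_colorSum_image a₂ f₂
    (colorSum_inc_eq_colorSum_image G₂ h₂ hz₂ f₂ ▸ hf₂ u₂)
  refine ⟨threeJoinColoring h₁ h₂ hz₁ hz₂ (σ₁ ∘ f₁) (σ₂ ∘ f₂), (cycleContinuous_K23_iff _).2 ?_⟩
  rintro (⟨v, hv⟩ | ⟨v, hv⟩)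
  · rw [colorSum_threeJoinColoring_inl h₁ h₂ hz₁ hz₂ _ _ v hv]
    have := (hf₁ v).colorSum_perm σ₁
    rw [colorSum_univ_eq_subtype_add_image a₁] at this
    exact this.add_of_add_add (hσ₁ (G₁.inc v))
  · rw [colorSum_threeJoinColoring_inr h₁ h₂ hz₁ hz₂ _ _ v hv]
    have := (hf₂ v).colorSum_perm σ₂
    rw [colorSum_univ_eq_subtype_add_image a₂] at this
    exact this.add_of_add_add (hσ₂ (G₂.inc v))

theorem JoinClosure.hasCycleContinuousMap {A H : Multigraph} (hH : JoinClosure A H)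
    (hA : A.HasCycleContinuousMap K23) : H.HasCycleContinuousMap K23 := by
  induction hH with
  | base => exact hA
  | twoL _ _ _ _ _ hG' ih => exact HasCycleContinuousMap.twoJoin _ _ ih hG'
  | twoR _ _ _ _ _ hG' ih => exact HasCycleContinuousMap.twoJoin _ _ hG' ih
  | threeL _ _ _ _ _ _ _ _ _ _ _ hG' ih => exact HasCycleContinuousMap.threeJoin _ _ _ _ ih hG'
  | threeR _ _ _ _ _ _ _ _ _ _ _ hG' ih => exact HasCycleContinuousMap.threeJoin _ _ _ _ hG' ih

end Multigraph

open Multigraph in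
/-- if `G − e` admits a cycle-continuous mapping to `K₂³` and `H` is
obtained from `G − e` by a sequence of 2-joins and 3-joins with graphs admitting
cycle-continuous mappings to `K₂³`, then so does `H`. -/
theorem joinClosure_cc_K23 (G : Multigraph) (e : G.E)
    (hGe : ∃ f : (G.deleteEdge e).E → K23.E, CycleContinuous (G.deleteEdge e) K23 f)
    (H : Multigraph) (hH : JoinClosure (G.deleteEdge e) H) :
    ∃ f : H.E → K23.E, CycleContinuous H K23 f :=
  hH.hasCycleContinuousMap hGe
end
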